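/- Let n ≥ 1, let X be an n-category, let a ∈ X_0 be a vertex, let f : D^l → X be a simplicial map, and let h : [r] → [l] be any function, inducing a simplicial map D^r → D^l. Then the induced map ĥ : Hom^L_X(a, f∘h) → Hom^L_X(a, f), given by (g,e) ↦ (g, h∘e), is a weak equivalence of (n−1)-groupoids (in particular of Kan complexes). -/

import Mathlib

open CategoryTheory Simplicial Opposite

universe u

namespace Paper

/-- A simplicial set has the Kan extension property for all horns. -/
def IsKan (X : SSet.{u}) : Prop :=
  ∀ (m : ℕ), 0 < m → ∀ (i : Fin (m + 1)) (σ : (Λ[m, i] : SSet.{u}) ⟶ X),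
    ∃ τ : Δ[m] ⟶ X, σ = Λ[m, i].ι ≫ τ

/-- `X` is an `n`-groupoid: every horn has a filler, unique in dimensions `≥ n+1`. -/
def IsNGroupoid (n : ℕ) (X : SSet.{u}) : Prop :=
  IsKan X ∧
    ∀ (m : ℕ), n + 1 ≤ m → ∀ (i : Fin (m + 1)) (τ τ' : Δ[m] ⟶ X),
      Λ[m, i].ι ≫ τ = Λ[m, i].ι ≫ τ' → τ = τ'

/-- `X` is an `n`-category: every inner horn has a filler, unique in dimensions `≥ n+1`. -/
def IsNCategory (n : ℕ) (X : SSet.{u}) : Prop :=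
  (∀ (m : ℕ) (i : Fin (m + 1)), 0 < (i : ℕ) → (i : ℕ) < m →
      ∀ (σ : (Λ[m, i] : SSet.{u}) ⟶ X), ∃ τ : Δ[m] ⟶ X, σ = Λ[m, i].ι ≫ τ) ∧
    ∀ (m : ℕ), n + 1 ≤ m → ∀ (i : Fin (m + 1)), 0 < (i : ℕ) → (i : ℕ) < m →
      ∀ (τ τ' : Δ[m] ⟶ X),
        Λ[m, i].ι ≫ τ = Λ[m, i].ι ≫ τ' → τ = τ'

/-- Homotopy of `m`-simplices relative to the boundary: there is
`h ∈ X_{m+1}` with `d₀ h = α`, `d₁ h = β` and `dᵢ h = dᵢ (s₀ α)` for `2 ≤ i`. -/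
def Htpy (X : SSet.{u}) {m : ℕ} (α β : X _⦋m⦌) : Prop :=
  ∃ h : X _⦋m + 1⦌, X.δ 0 h = α ∧ X.δ 1 h = β ∧
    ∀ i : Fin (m + 2), 2 ≤ (i : ℕ) → X.δ i h = X.δ i (X.σ 0 α)

/-- The constant `m`-simplex at a vertex `a`. -/
def constSimplex (X : SSet.{u}) (a : X _⦋0⦌) (m : ℕ) : X _⦋m⦌ :=
  X.map (SimplexCategory.const ⦋m⦌ ⦋0⦌ 0).op a

/-- The cycle condition: `dᵢ x_j = d_{j-1} x_i` for `i < j`. -/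
def IsCycle (X : SSet.{u}) : ∀ {m : ℕ}, (Fin (m + 2) → X.obj (op ⦋m⦌)) → Prop := fun {m} x => match m, x with
  | 0, _ => True
  | m + 1, x =>
      ∀ (i j : ℕ) (hj : j < m + 3) (hij : i < j),
        X.δ ⟨i, by omega⟩ (x ⟨j, hj⟩) = X.δ ⟨j - 1, by omega⟩ (x ⟨i, by omega⟩)

/-- The type of `m`-cycles of `X`; by convention there is a unique `0`-cycle. -/
def CycleType (X : SSet.{u}) : ℕ → Type u := fun m => match m with
  | 0 => PUnit
  | m + 1 => { x : Fin (m + 2) → X.obj (op ⦋m⦌) // IsCycle X x }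

/-- `S(X, b)`: the set of `m`-simplices with boundary the cycle `b`
(all vertices, for `m = 0`). -/
def SSimp (X : SSet.{u}) : ∀ (m : ℕ), CycleType X m → Set (X _⦋m⦌) := fun m b => match m, b with
  | 0, _ => Set.univ
  | m + 1, b => { α | ∀ i : Fin (m + 2), X.δ i α = b.1 i }

lemma map_delta {X Y : SSet.{u}} (f : X ⟶ Y) {n : ℕ} (i : Fin (n + 2)) (x : X _⦋n + 1⦌) :
    f.app (op ⦋n⦌) (X.δ i x) = Y.δ i (f.app (op ⦋n + 1⦌) x) :=
  NatTrans.naturality_apply f (SimplexCategory.δ i).op x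

lemma map_sigma {X Y : SSet.{u}} (f : X ⟶ Y) {n : ℕ} (i : Fin (n + 1)) (x : X _⦋n⦌) :
    f.app (op ⦋n + 1⦌) (X.σ i x) = Y.σ i (f.app (op ⦋n⦌) x) :=
  NatTrans.naturality_apply f (SimplexCategory.σ i).op x

lemma map_const {X Y : SSet.{u}} (f : X ⟶ Y) (a : X _⦋0⦌) (m : ℕ) :
    f.app (op ⦋m⦌) (constSimplex X a m) = constSimplex Y (f.app (op ⦋0⦌) a) m :=
  NatTrans.naturality_apply f (SimplexCategory.const ⦋m⦌ ⦋0⦌ 0).op a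

/-- The image of a cycle under a simplicial map. -/
def cycleMap {X Y : SSet.{u}} (f : X ⟶ Y) : ∀ {m : ℕ}, CycleType X m → CycleType Y m := fun {m} b => match m, b with
  | 0, _ => PUnit.unit.{u + 1}
  | m + 1, b => ⟨fun i => f.app (op ⦋m⦌) (b.1 i), by
      cases m with
      | zero => trivial
      | succ m =>
        intro i j hj hij
        rw [← map_delta, ← map_delta, b.2 i j hj hij]⟩

lemma htpy_map {X Y : SSet.{u}} (f : X ⟶ Y) {m : ℕ} {α β : X _⦋m⦌} (h : Htpy X α β) :
    Htpy Y (f.app (op ⦋m⦌) α) (f.app (op ⦋m⦌) β) := by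
  obtain ⟨H, h0, h1, hrest⟩ := h
  refine ⟨f.app (op ⦋m + 1⦌) H, ?_, ?_, ?_⟩
  · rw [← map_delta, h0]
  · rw [← map_delta, h1]
  · intro i hi
    rw [← map_delta, hrest i hi, map_delta, map_sigma]

/-- `S_k(X, a)`: simplices all of whose faces are the constant simplex at `a`. -/
def SKset (X : SSet.{u}) (a : X _⦋0⦌) : (k : ℕ) → Set (X _⦋k⦌) := fun k => match k with
  | 0 => Set.univ
  | k + 1 => { α | ∀ i : Fin (k + 2), X.δ i α = constSimplex X a k }

/-- The `k`-th homotopy set `π_k(X, a)`. -/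
def piSet (X : SSet.{u}) (a : X _⦋0⦌) (k : ℕ) : Type u :=
  Quot (fun (α β : SKset X a k) => Htpy X α.1 β.1)

lemma skMap_mem {X Y : SSet.{u}} (f : X ⟶ Y) (a : X _⦋0⦌) (k : ℕ) (α : SKset X a k) :
    f.app (op ⦋k⦌) α.1 ∈ SKset Y (f.app (op ⦋0⦌) a) k := by
  cases k with
  | zero => trivial
  | succ k =>
    intro i
    rw [← map_delta f i α.1, α.2 i, map_const]

/-- The map induced on homotopy sets by a simplicial map. -/
def piMap {X Y : SSet.{u}} (f : X ⟶ Y) (a : X _⦋0⦌) (k : ℕ) :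
    piSet X a k → piSet Y (f.app (op ⦋0⦌) a) k :=
  Quot.lift (fun α => Quot.mk _ ⟨f.app (op ⦋k⦌) α.1, skMap_mem f a k α⟩)
    (fun _ _ h => Quot.sound (htpy_map f h))

/-- A weak equivalence of simplicial sets (Kan complexes): all induced maps on
homotopy sets are bijections. -/
def IsWeakEquiv {X Y : SSet.{u}} (f : X ⟶ Y) : Prop :=
  ∀ (a : X _⦋0⦌) (k : ℕ), Function.Bijective (piMap f a k)

/-- `D^l`: the simplicial set whose `k`-simplices are all functions `[k] → [l]`
(not necessarily monotone). -/
def Disc (l : ℕ) : SSet.{u} where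
  obj k := Fin (k.unop.len + 1) → ULift.{u} (Fin (l + 1))
  map t := TypeCat.ofHom fun e => e ∘ t.unop.toOrderHom
  map_id := by intros; rfl
  map_comp := by intros; rfl

/-- The simplicial map `D^r ⟶ D^l` induced by a function `[r] → [l]`. -/
def discMap {r l : ℕ} (h : Fin (r + 1) → Fin (l + 1)) : Disc.{u} r ⟶ Disc.{u} l where
  app k := TypeCat.ofHom fun e => fun j => ULift.up (h (e j).down)
  naturality := by intros; rfl

lemma comp_const_zero {x y : SimplexCategory} (t : x ⟶ y) :
    t ≫ SimplexCategory.const y ⦋0⦌ 0 = SimplexCategory.const x ⦋0⦌ 0 := by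
  ext i : 3
  exact (Fin.eq_zero ((t ≫ SimplexCategory.const y ⦋0⦌ 0).toOrderHom i)).trans
    (Fin.eq_zero ((SimplexCategory.const x ⦋0⦌ 0).toOrderHom i)).symm

/-- The map `D^0 ⟶ X` determined by the vertex `a`. -/
def discPt (X : SSet.{u}) (a : X _⦋0⦌) : Disc.{u} 0 ⟶ X where
  app k := TypeCat.ofHom fun _ => X.map (SimplexCategory.const k.unop ⦋0⦌ 0).op a
  naturality := by
    intro k k' t
    ext e
    show X.map (SimplexCategory.const k'.unop ⦋0⦌ 0).op a
      = X.map t (X.map (SimplexCategory.const k.unop ⦋0⦌ 0).op a)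
    rw [← FunctorToTypes.map_comp_apply, ← t.op_unop, ← op_comp, comp_const_zero]

/-- The order-preserving map `t⁺` with `t⁺(0) = 0` and `t⁺(i+1) = t(i)+1`. -/
def plusOrderHom {p q : ℕ} (t : Fin (p + 1) →o Fin (q + 1)) :
    Fin (p + 2) →o Fin (q + 2) where
  toFun := Fin.cases 0 (fun j => (t j).succ)
  monotone' := by
    intro i j hij
    induction i using Fin.cases with
    | zero => simp
    | succ i =>
      induction j using Fin.cases with
      | zero => exact absurd hij (not_le.mpr (Fin.succ_pos i))
      | succ j =>
        simp only [Fin.cases_succ]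
        exact Fin.succ_le_succ_iff.mpr (t.monotone (Fin.succ_le_succ_iff.mp hij))

/-- The morphism `t⁺ : [x.len + 1] ⟶ [y.len + 1]` induced by `t : x ⟶ y`. -/
def tplus {x y : SimplexCategory} (t : x ⟶ y) :
    (⦋x.len + 1⦌ : SimplexCategory) ⟶ ⦋y.len + 1⦌ :=
  SimplexCategory.mkHom (plusOrderHom t.toOrderHom)

lemma tplus_id (x : SimplexCategory) :
    tplus (𝟙 x) = 𝟙 (⦋x.len + 1⦌ : SimplexCategory) := by
  ext i : 3
  induction i using Fin.cases with
  | zero => rfl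
  | succ i => rfl

lemma tplus_comp {x y z : SimplexCategory} (t : x ⟶ y) (s : y ⟶ z) :
    tplus (t ≫ s) = tplus t ≫ tplus s := by
  ext i : 3
  induction i using Fin.cases with
  | zero => rfl
  | succ i => rfl

lemma delta_op_tplus {x y : SimplexCategory} (t : x ⟶ y) :
    (tplus t).op ≫ (SimplexCategory.δ (0 : Fin (x.len + 2))).op
      = (SimplexCategory.δ (0 : Fin (y.len + 2))).op ≫ t.op := by
  rw [← op_comp, ← op_comp]
  congr 1

/-- `Hom^L_X(a, f)`: the simplicial set of left morphisms from the vertex `a`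
to the map `f : D^l ⟶ X`. -/
def HomL (X : SSet.{u}) (a : X _⦋0⦌) {l : ℕ} (f : Disc.{u} l ⟶ X) : SSet.{u} where
  obj k := { p : X.obj (op ⦋k.unop.len + 1⦌) × ((Disc.{u} l).obj k) //
      X.map (SimplexCategory.const ⦋0⦌ ⦋k.unop.len + 1⦌ 0).op p.1 = a ∧
      X.map (SimplexCategory.δ (0 : Fin (k.unop.len + 2))).op p.1 = f.app k p.2 }
  map {k k'} t := TypeCat.ofHom fun p => ⟨(X.map (tplus t.unop).op p.1.1, (Disc.{u} l).map t p.1.2), by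
      rw [← FunctorToTypes.map_comp_apply, ← op_comp, SimplexCategory.const_comp]
      exact p.2.1, by
      rw [← FunctorToTypes.map_comp_apply, delta_op_tplus t.unop,
        Quiver.Hom.op_unop, FunctorToTypes.map_comp_apply, p.2.2]
      exact (NatTrans.naturality_apply f t p.1.2).symm⟩
  map_id := by
    intro k
    refine ConcreteCategory.hom_ext _ _ fun p => ?_
    apply Subtype.ext
    show (X.map (tplus (𝟙 k).unop).op p.1.1, (Disc.{u} l).map (𝟙 k) p.1.2)
      = (p.1.1, p.1.2)
    rw [Prod.mk.injEq]
    constructor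
    · show X.map (tplus (𝟙 k.unop)).op p.1.1 = p.1.1
      rw [tplus_id, op_id, FunctorToTypes.map_id_apply]
    · exact FunctorToTypes.map_id_apply (Disc.{u} l) p.1.2
  map_comp := by
    intro k k' k'' t s
    refine ConcreteCategory.hom_ext _ _ fun p => ?_
    apply Subtype.ext
    show (X.map (tplus (t ≫ s).unop).op p.1.1, (Disc.{u} l).map (t ≫ s) p.1.2) = _
    rw [Prod.mk.injEq]
    constructor
    · show X.map (tplus (s.unop ≫ t.unop)).op p.1.1 = _
      rw [tplus_comp, op_comp, FunctorToTypes.map_comp_apply]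
      rfl
    · exact FunctorToTypes.map_comp_apply (Disc.{u} l) t s p.1.2

/-- The projection `Hom^L_X(a, f) ⟶ D^l`. -/
def homLProj (X : SSet.{u}) (a : X _⦋0⦌) {l : ℕ} (f : Disc.{u} l ⟶ X) :
    HomL X a f ⟶ Disc.{u} l where
  app k := TypeCat.ofHom fun p => p.1.2
  naturality := by intros; rfl

/-- The map `Hom^L_X(a, f ∘ h) ⟶ Hom^L_X(a, f)` induced by `h : [r] → [l]`. -/
def homLWhisker (X : SSet.{u}) (a : X _⦋0⦌) {r l : ℕ} (h : Fin (r + 1) → Fin (l + 1))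
    (f : Disc.{u} l ⟶ X) : HomL X a (discMap h ≫ f) ⟶ HomL X a f where
  app k := TypeCat.ofHom fun p => ⟨(p.1.1, (discMap h).app k p.1.2), p.2.1, p.2.2⟩
  naturality := by intros; rfl

/-- The indiscrete groupoid on a type: exactly one morphism between any two objects. -/
def Indiscrete (α : Type u) : Type u := α

instance (α : Type u) : Groupoid.{u} (Indiscrete α) where
  Hom _ _ := PUnit.{u + 1}
  id _ := PUnit.unit
  comp _ _ := PUnit.unit
  inv _ := PUnit.unit

/-- The map of nerves induced by a functor. -/
def nerveMap {C D : Type u} [Category.{u} C] [Category.{u} D] (F : C ⥤ D) :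
    nerve C ⟶ nerve D :=
  nerveFunctor.map (X := Cat.of C) (Y := Cat.of D) F.toCatHom

/-!
In positive degrees, a simplex of `Hom^L_X(a, f ∘ h)` whose faces are all degenerate at the base
point has constant `D^r`-component, since every vertex of a simplex of dimension `≥ 1` lies in
`d₀` or `d₁`. So `ĥ` is a bijection between such spheres, and between the homotopies relating
them. In degree `0`, a vertex `(g, v)` of `Hom^L_X(a, f)` is moved over a fixed vertex `h w` by
composing `g` with `f(v, h w)` (an inner `2`-horn); this is a homotopy inverse of `ĥ`, and it
respects homotopy by two inner `3`-horn fillers.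
-/

section InnerHorn

open SSet

lemma IsNCategory.exists_δ_eq_of_horn {n : ℕ} {X : SSet.{u}} (hX : IsNCategory n X) {m : ℕ}
    {i : Fin (m + 3)} (hi₀ : 0 < (i : ℕ)) (hi : (i : ℕ) < m + 2)
    (φ : (Λ[m + 2, i] : SSet.{u}) ⟶ X) :
    ∃ y : X _⦋m + 2⦌, ∀ (j : Fin (m + 3)) (hj : j ≠ i),
      X.δ j y = yonedaEquiv (horn.ι i j hj ≫ φ) := by
  obtain ⟨τ, rfl⟩ := hX.1 (m + 2) i hi₀ hi φ
  refine ⟨yonedaEquiv τ, fun j hj => ?_⟩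
  rw [← stdSimplex.yonedaEquiv_δ_comp, horn.ι_ι_assoc]

lemma δ_comp_yonedaEquiv_symm_eq {X : SSet.{u}} {m : ℕ} {x y : X _⦋m + 1⦌} {i j : Fin (m + 2)}
    (h : X.δ i x = X.δ j y) :
    stdSimplex.δ i ≫ yonedaEquiv.symm x = stdSimplex.δ j ≫ yonedaEquiv.symm y := by
  rw [stdSimplex.δ_comp_yonedaEquiv_symm, stdSimplex.δ_comp_yonedaEquiv_symm, h]

lemma IsNCategory.exists_fill₂₁ {n : ℕ} {X : SSet.{u}} (hX : IsNCategory n X)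
    {x₀ x₂ : X _⦋1⦌} (h : X.δ 0 x₂ = X.δ 1 x₀) :
    ∃ y : X _⦋2⦌, X.δ 0 y = x₀ ∧ X.δ 2 y = x₂ := by
  obtain ⟨y, hy⟩ := hX.exists_δ_eq_of_horn (m := 0) (i := 1) (by decide) (by decide)
    (horn₂₁.isPushout.desc _ _ (δ_comp_yonedaEquiv_symm_eq h))
  refine ⟨y, ?_, ?_⟩
  · rw [hy 0 (by decide), horn₂₁.isPushout.inr_desc, Equiv.apply_symm_apply]
  · rw [hy 2 (by decide), horn₂₁.isPushout.inl_desc, Equiv.apply_symm_apply]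

lemma IsNCategory.exists_face₃₁ {n : ℕ} {X : SSet.{u}} (hX : IsNCategory n X)
    {x₀ x₂ x₃ : X _⦋2⦌} (h₁₂ : X.δ 2 x₀ = X.δ 0 x₃) (h₁₃ : X.δ 1 x₀ = X.δ 0 x₂)
    (h₂₃ : X.δ 2 x₂ = X.δ 2 x₃) :
    ∃ y : X _⦋2⦌, X.δ 0 y = X.δ 0 x₀ ∧ X.δ 1 y = X.δ 1 x₂ ∧ X.δ 2 y = X.δ 1 x₃ := by
  obtain ⟨φ, h₀, h₂, h₃⟩ := horn₃₁.exists_desc _ _ _ (δ_comp_yonedaEquiv_symm_eq h₁₂)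
    (δ_comp_yonedaEquiv_symm_eq h₁₃) (δ_comp_yonedaEquiv_symm_eq h₂₃)
  obtain ⟨z, hz⟩ := hX.exists_δ_eq_of_horn (m := 1) (i := 1) (by decide) (by decide) φ
  have hz₀ : X.δ 0 z = x₀ := by rw [hz 0 (by decide), h₀, Equiv.apply_symm_apply]
  have hz₂ : X.δ 2 z = x₂ := by rw [hz 2 (by decide), h₂, Equiv.apply_symm_apply]
  have hz₃ : X.δ 3 z = x₃ := by rw [hz 3 (by decide), h₃, Equiv.apply_symm_apply]
  exact ⟨X.δ 1 z,
    (δ_comp_δ_self_apply (i := (0 : Fin 3)) z).symm.trans (congrArg (X.δ 0) hz₀),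
    (δ_comp_δ_self_apply (i := (1 : Fin 3)) z).trans (congrArg (X.δ 1) hz₂),
    (δ_comp_δ_apply (i := (1 : Fin 3)) (j := 2) (by decide) z).symm.trans
      (congrArg (X.δ 1) hz₃)⟩

lemma IsNCategory.exists_face₃₂ {n : ℕ} {X : SSet.{u}} (hX : IsNCategory n X)
    {x₀ x₁ x₃ : X _⦋2⦌} (h₀₂ : X.δ 2 x₁ = X.δ 1 x₃) (h₁₂ : X.δ 2 x₀ = X.δ 0 x₃)
    (h₂₃ : X.δ 0 x₀ = X.δ 0 x₁) :
    ∃ y : X _⦋2⦌, X.δ 0 y = X.δ 1 x₀ ∧ X.δ 1 y = X.δ 1 x₁ ∧ X.δ 2 y = X.δ 2 x₃ := by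
  obtain ⟨φ, h₀, h₁, h₃⟩ := horn₃₂.exists_desc _ _ _ (δ_comp_yonedaEquiv_symm_eq h₀₂)
    (δ_comp_yonedaEquiv_symm_eq h₁₂) (δ_comp_yonedaEquiv_symm_eq h₂₃)
  obtain ⟨z, hz⟩ := hX.exists_δ_eq_of_horn (m := 1) (i := 2) (by decide) (by decide) φ
  have hz₀ : X.δ 0 z = x₀ := by rw [hz 0 (by decide), h₀, Equiv.apply_symm_apply]
  have hz₁ : X.δ 1 z = x₁ := by rw [hz 1 (by decide), h₁, Equiv.apply_symm_apply]
  have hz₃ : X.δ 3 z = x₃ := by rw [hz 3 (by decide), h₃, Equiv.apply_symm_apply]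
  exact ⟨X.δ 2 z,
    (δ_comp_δ_apply (i := (0 : Fin 3)) (j := 1) (by decide) z).trans (congrArg (X.δ 1) hz₀),
    (δ_comp_δ_self_apply (i := (1 : Fin 3)) z).symm.trans (congrArg (X.δ 1) hz₁),
    (δ_comp_δ_self_apply (i := (2 : Fin 3)) z).trans (congrArg (X.δ 2) hz₃)⟩

end InnerHorn

lemma htpy_refl (X : SSet.{u}) {m : ℕ} (α : X _⦋m⦌) : Htpy X α α :=
  ⟨X.σ 0 α, SSet.δ_comp_σ_self_apply 0 α, SSet.δ_comp_σ_succ_apply 0 α, fun _ _ => rfl⟩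

lemma piMap_bijective_of_htpy {X Y : SSet.{u}} (f : X ⟶ Y) (a : X _⦋0⦌) (k : ℕ)
    (g : SKset Y (f.app _ a) k → SKset X a k)
    (hg : ∀ β γ, Htpy Y β.1 γ.1 → Htpy X (g β).1 (g γ).1)
    (hgf : ∀ α, Htpy X (g ⟨f.app _ α.1, skMap_mem f a k α⟩).1 α.1)
    (hfg : ∀ β, Htpy Y (f.app _ (g β).1) β.1) :
    Function.Bijective (piMap f a k) := by
  refine Function.bijective_iff_has_inverse.mpr
    ⟨Quot.lift (fun β => Quot.mk _ (g β)) fun β γ H => Quot.sound (hg β γ H), ?_, ?_⟩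
  · rintro ⟨α⟩
    exact Quot.sound (hgf α)
  · rintro ⟨β⟩
    exact Quot.sound (hfg β)

lemma map_const_zero_δ {X : SSet.{u}} {m : ℕ} (x : X _⦋m + 1⦌) {j : Fin (m + 2)} (hj : j ≠ 0) :
    X.map (SimplexCategory.const ⦋0⦌ ⦋m⦌ 0).op (X.δ j x)
      = X.map (SimplexCategory.const ⦋0⦌ ⦋m + 1⦌ 0).op x := by
  rw [SimplicialObject.δ, ← Functor.map_comp_apply, ← op_comp, SimplexCategory.const_comp,
    show (SimplexCategory.δ j).toOrderHom 0 = 0 from Fin.succAbove_ne_zero_zero hj]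

lemma Disc.eq_const_of_δ {l m : ℕ} {e : (Disc.{u} l) _⦋m + 1⦌} {v : ULift.{u} (Fin (l + 1))}
    (h₀ : (Disc.{u} l).δ 0 e = fun _ => v) (h₁ : (Disc.{u} l).δ 1 e = fun _ => v) :
    e = fun _ => v := by
  funext t
  induction t using Fin.cases with
  | zero => exact congrFun h₁ 0
  | succ s => exact congrFun h₀ s

lemma δ_app_disc {X : SSet.{u}} {l m : ℕ} (f : Disc.{u} l ⟶ X) (i : Fin (m + 2))
    {e : (Disc.{u} l) _⦋m + 1⦌} {e' : (Disc.{u} l) _⦋m⦌} (h : ∀ t, e (i.succAbove t) = e' t) :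
    X.δ i (f.app _ e) = f.app _ e' := by
  rw [← map_delta]
  exact congrArg _ (funext h)

lemma tplus_δ {m : ℕ} (i : Fin (m + 2)) :
    tplus (SimplexCategory.δ i) = SimplexCategory.δ i.succ := by
  ext t : 3
  induction t using Fin.cases with
  | zero => exact (Fin.succAbove_ne_zero_zero (Fin.succ_ne_zero i)).symm
  | succ s => exact (Fin.succ_succAbove_succ i s).symm

namespace HomL

variable {X : SSet.{u}} {a : X _⦋0⦌} {l : ℕ} {f : Disc.{u} l ⟶ X}

lemma ext {k : SimplexCategoryᵒᵖ} {p q : (HomL X a f).obj k} (h₁ : p.1.1 = q.1.1)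
    (h₂ : p.1.2 = q.1.2) : p = q :=
  Subtype.ext (Prod.ext h₁ h₂)

lemma δ_fst {m : ℕ} (i : Fin (m + 2)) (p : (HomL X a f) _⦋m + 1⦌) :
    ((HomL X a f).δ i p).1.1 = X.δ i.succ p.1.1 := by
  change X.map (tplus (SimplexCategory.δ i)).op p.1.1 = _
  rw [tplus_δ]
  rfl

lemma snd_eq_const_of_mem_SKset {p : (HomL X a f) _⦋0⦌} {k : ℕ} {α : (HomL X a f) _⦋k + 1⦌}
    (hα : α ∈ SKset (HomL X a f) p (k + 1)) : α.1.2 = fun _ => p.1.2 0 :=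
  Disc.eq_const_of_δ (congrArg (·.1.2) (hα 0)) (congrArg (·.1.2) (hα 1))

lemma htpy_iff_exists_simplex {p q : (HomL X a f) _⦋0⦌} :
    Htpy (HomL X a f) p q ↔ ∃ G : X _⦋2⦌,
      X.δ 0 G = f.app _ ![q.1.2 0, p.1.2 0] ∧ X.δ 1 G = p.1.1 ∧ X.δ 2 G = q.1.1 := by
  constructor
  · rintro ⟨H, h₀, h₁, -⟩
    refine ⟨H.1.1, H.2.2.trans (congrArg _ (funext fun t => ?_)),
      (δ_fst 0 H).symm.trans (congrArg (·.1.1) h₀), (δ_fst 1 H).symm.trans (congrArg (·.1.1) h₁)⟩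
    fin_cases t
    · exact congrArg (·.1.2 0) h₁
    · exact congrArg (·.1.2 0) h₀
  · rintro ⟨G, h₀, h₁, h₂⟩
    refine ⟨⟨(G, ![q.1.2 0, p.1.2 0]), ?_, h₀⟩, ?_, ?_, fun i hi => absurd i.isLt (by omega)⟩
    · rw [← map_const_zero_δ G (j := 2) (by decide), h₂]
      exact q.2.1
    · exact ext ((δ_fst 0 _).trans h₁) (funext fun t => by fin_cases t; rfl)
    · exact ext ((δ_fst 1 _).trans h₂) (funext fun t => by fin_cases t; rfl)

end HomL

section Whisker

variable {X : SSet.{u}} {a : X _⦋0⦌} {r l : ℕ} {h : Fin (r + 1) → Fin (l + 1)}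
  {f : Disc.{u} l ⟶ X}

lemma eq_of_homLWhisker_app_eq {k : SimplexCategoryᵒᵖ} {α β : (HomL X a (discMap h ≫ f)).obj k}
    (he : α.1.2 = β.1.2) (hαβ : (homLWhisker X a h f).app k α = (homLWhisker X a h f).app k β) :
    α = β :=
  HomL.ext (congrArg (·.1.1) hαβ) he

def liftConst (w : ULift.{u} (Fin (r + 1))) {k : SimplexCategoryᵒᵖ} (β : (HomL X a f).obj k)
    (hβ : β.1.2 = fun _ => ⟨h w.down⟩) : (HomL X a (discMap h ≫ f)).obj k :=
  ⟨(β.1.1, fun _ => w), β.2.1, β.2.2.trans (by rw [hβ]; rfl)⟩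

lemma homLWhisker_app_liftConst (w : ULift.{u} (Fin (r + 1))) {k : SimplexCategoryᵒᵖ}
    (β : (HomL X a f).obj k) (hβ : β.1.2 = fun _ => ⟨h w.down⟩) :
    (homLWhisker X a h f).app k (liftConst w β hβ) = β :=
  HomL.ext rfl hβ.symm

variable (a' : (HomL X a (discMap h ≫ f)) _⦋0⦌) (k : ℕ)

def liftSKset (β : SKset (HomL X a f) ((homLWhisker X a h f).app _ a') (k + 1)) :
    SKset (HomL X a (discMap h ≫ f)) a' (k + 1) :=
  ⟨liftConst (a'.1.2 0) β.1 (HomL.snd_eq_const_of_mem_SKset β.2), fun i =>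
    eq_of_homLWhisker_app_eq rfl <| (map_delta _ i _).trans <|
      (congrArg _ (homLWhisker_app_liftConst _ _ _)).trans <| (β.2 i).trans (map_const _ a' k).symm⟩

lemma homLWhisker_liftSKset (β : SKset (HomL X a f) ((homLWhisker X a h f).app _ a') (k + 1)) :
    (homLWhisker X a h f).app _ (liftSKset a' k β).1 = β.1 :=
  homLWhisker_app_liftConst _ _ (HomL.snd_eq_const_of_mem_SKset β.2)

lemma liftSKset_homLWhisker (α : SKset (HomL X a (discMap h ≫ f)) a' (k + 1)) :
    (liftSKset a' k ⟨_, skMap_mem (homLWhisker X a h f) a' (k + 1) α⟩).1 = α.1 :=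
  eq_of_homLWhisker_app_eq (HomL.snd_eq_const_of_mem_SKset α.2).symm
    (homLWhisker_app_liftConst _ _ (HomL.snd_eq_const_of_mem_SKset
      (skMap_mem (homLWhisker X a h f) a' (k + 1) α)))

lemma htpy_liftSKset (β γ : SKset (HomL X a f) ((homLWhisker X a h f).app _ a') (k + 1))
    (hβγ : Htpy (HomL X a f) β.1 γ.1) :
    Htpy (HomL X a (discMap h ≫ f)) (liftSKset a' k β).1 (liftSKset a' k γ).1 := by
  obtain ⟨H, h₀, h₁, hδ⟩ := hβγ
  have hH : H.1.2 = fun _ => ⟨h (a'.1.2 0).down⟩ :=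
    Disc.eq_const_of_δ ((congrArg (·.1.2) h₀).trans (HomL.snd_eq_const_of_mem_SKset β.2))
      ((congrArg (·.1.2) h₁).trans (HomL.snd_eq_const_of_mem_SKset γ.2))
  refine ⟨liftConst (a'.1.2 0) H hH, ?_, ?_, fun i hi => ?_⟩
  · exact eq_of_homLWhisker_app_eq rfl (by
      rw [map_delta, homLWhisker_app_liftConst _ H hH, h₀, homLWhisker_liftSKset])
  · exact eq_of_homLWhisker_app_eq rfl (by
      rw [map_delta, homLWhisker_app_liftConst _ H hH, h₁, homLWhisker_liftSKset])
  · exact eq_of_homLWhisker_app_eq rfl (by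
      rw [map_delta, homLWhisker_app_liftConst _ H hH, hδ i hi, map_delta, map_sigma,
        homLWhisker_liftSKset])

lemma piMap_homLWhisker_succ_bijective :
    Function.Bijective (piMap (homLWhisker X a h f) a' (k + 1)) :=
  piMap_bijective_of_htpy _ a' (k + 1) (liftSKset a' k) (htpy_liftSKset a' k)
    (fun α => by rw [liftSKset_homLWhisker]; exact htpy_refl _ _)
    (fun β => by rw [homLWhisker_liftSKset]; exact htpy_refl _ _)

end Whisker

section Vertex

variable {X : SSet.{u}} {a : X _⦋0⦌} {r l n : ℕ} {h : Fin (r + 1) → Fin (l + 1)}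
  {f : Disc.{u} l ⟶ X}

lemma exists_liftTriangle (hX : IsNCategory n X) (z : ULift.{u} (Fin (l + 1)))
    (p : (HomL X a f) _⦋0⦌) :
    ∃ G : X _⦋2⦌, X.δ 0 G = f.app _ ![p.1.2 0, z] ∧ X.δ 2 G = p.1.1 :=
  hX.exists_fill₂₁ (p.2.2.trans (δ_app_disc f 1 fun t => by fin_cases t; rfl).symm)

noncomputable def liftTriangle (hX : IsNCategory n X) (z : ULift.{u} (Fin (l + 1)))
    (p : (HomL X a f) _⦋0⦌) : X _⦋2⦌ :=
  (exists_liftTriangle hX z p).choose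

lemma δ_zero_liftTriangle (hX : IsNCategory n X) (z : ULift.{u} (Fin (l + 1)))
    (p : (HomL X a f) _⦋0⦌) : X.δ 0 (liftTriangle hX z p) = f.app _ ![p.1.2 0, z] :=
  (exists_liftTriangle hX z p).choose_spec.1

lemma δ_two_liftTriangle (hX : IsNCategory n X) (z : ULift.{u} (Fin (l + 1)))
    (p : (HomL X a f) _⦋0⦌) : X.δ 2 (liftTriangle hX z p) = p.1.1 :=
  (exists_liftTriangle hX z p).choose_spec.2

noncomputable def liftVertex (hX : IsNCategory n X) (w : ULift.{u} (Fin (r + 1)))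
    (p : (HomL X a f) _⦋0⦌) : (HomL X a (discMap h ≫ f)) _⦋0⦌ :=
  ⟨(X.δ 1 (liftTriangle hX ⟨h w.down⟩ p), fun _ => w), by
    rw [map_const_zero_δ _ one_ne_zero, ← map_const_zero_δ _ (j := 2) (by decide),
      δ_two_liftTriangle]
    exact p.2.1, by
    refine (SSet.δ_comp_δ_self_apply (i := (0 : Fin 2)) _).symm.trans ?_
    exact (congrArg (X.δ 0) (δ_zero_liftTriangle hX _ p)).trans
      (δ_app_disc f 0 fun t => by fin_cases t; rfl)⟩

lemma htpy_homLWhisker_liftVertex (hX : IsNCategory n X) (w : ULift.{u} (Fin (r + 1)))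
    (p : (HomL X a f) _⦋0⦌) :
    Htpy (HomL X a f) ((homLWhisker X a h f).app _ (liftVertex hX w p)) p :=
  HomL.htpy_iff_exists_simplex.2
    ⟨liftTriangle hX _ p, δ_zero_liftTriangle hX _ p, rfl, δ_two_liftTriangle hX _ p⟩

lemma htpy_liftVertex_homLWhisker (hX : IsNCategory n X) (w : ULift.{u} (Fin (r + 1)))
    (α : (HomL X a (discMap h ≫ f)) _⦋0⦌) :
    Htpy (HomL X a (discMap h ≫ f)) (liftVertex hX w ((homLWhisker X a h f).app _ α)) α :=
  HomL.htpy_iff_exists_simplex.2 ⟨liftTriangle hX ⟨h w.down⟩ ((homLWhisker X a h f).app _ α),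
    (δ_zero_liftTriangle hX _ _).trans (congrArg _ (funext fun t => by fin_cases t <;> rfl)),
    rfl, δ_two_liftTriangle hX _ _⟩

/-- A `Λ[3, 2]`-filler on `K`, `liftTriangle p` and `f(q, p, h w)` gives a composite `M` of `q`
with `f(q, h w)` whose long edge is that of `liftVertex p`; a `Λ[3, 1]`-filler on `M`,
`liftTriangle q` and `f(q, h w, h w)` then gives the edge between the two lifts. -/
lemma htpy_liftVertex (hX : IsNCategory n X) (w : ULift.{u} (Fin (r + 1)))
    {p q : (HomL X a f) _⦋0⦌} (hpq : Htpy (HomL X a f) p q) :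
    Htpy (HomL X a (discMap h ≫ f)) (liftVertex hX w p) (liftVertex hX w q) := by
  obtain ⟨K, hK₀, hK₁, hK₂⟩ := HomL.htpy_iff_exists_simplex.1 hpq
  set z : ULift.{u} (Fin (l + 1)) := ⟨h w.down⟩
  obtain ⟨M, hM₀, hM₁, hM₂⟩ := hX.exists_face₃₂ (x₀ := f.app _ ![q.1.2 0, p.1.2 0, z])
    (x₁ := liftTriangle hX z p) (x₃ := K) ((δ_two_liftTriangle hX z p).trans hK₁.symm)
    ((δ_app_disc f 2 (e' := ![q.1.2 0, p.1.2 0]) fun t => by fin_cases t <;> rfl).trans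
      hK₀.symm)
    ((δ_app_disc f 0 (e' := ![p.1.2 0, z]) fun t => by fin_cases t <;> rfl).trans
      (δ_zero_liftTriangle hX z p).symm)
  obtain ⟨L, hL₀, hL₁, hL₂⟩ := hX.exists_face₃₁ (x₀ := f.app _ ![q.1.2 0, z, z]) (x₂ := M)
    (x₃ := liftTriangle hX z q)
    ((δ_app_disc f 2 (e' := ![q.1.2 0, z]) fun t => by fin_cases t <;> rfl).trans
      (δ_zero_liftTriangle hX z q).symm)
    ((δ_app_disc f 1 (e' := ![q.1.2 0, z]) fun t => by fin_cases t <;> rfl).trans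
      (hM₀.trans (δ_app_disc f 1 fun t => by fin_cases t <;> rfl)).symm)
    (hM₂.trans (hK₂.trans (δ_two_liftTriangle hX z q).symm))
  exact HomL.htpy_iff_exists_simplex.2
    ⟨L, hL₀.trans (δ_app_disc f 0 fun t => by fin_cases t <;> rfl), hL₁.trans hM₁, hL₂⟩

lemma piMap_homLWhisker_zero_bijective (hX : IsNCategory n X)
    (a' : (HomL X a (discMap h ≫ f)) _⦋0⦌) :
    Function.Bijective (piMap (homLWhisker X a h f) a' 0) :=
  piMap_bijective_of_htpy _ a' 0 (fun β => ⟨liftVertex hX (a'.1.2 0) β.1, trivial⟩)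
    (fun _ _ => htpy_liftVertex hX _) (fun α => htpy_liftVertex_homLWhisker hX _ α.1)
    (fun β => htpy_homLWhisker_liftVertex hX _ β.1)

end Vertex

theorem homLWhisker_weakEquiv_general (n : ℕ) (X : SSet.{u}) (hX : IsNCategory n X)
    (a : X _⦋0⦌) (r l : ℕ) (f : Disc.{u} l ⟶ X) (h : Fin (r + 1) → Fin (l + 1)) :
    IsWeakEquiv (homLWhisker X a h f) := by
  intro a' k
  cases k with
  | zero => exact piMap_homLWhisker_zero_bijective hX a'
  | succ k => exact piMap_homLWhisker_succ_bijective a' k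

/-- the map `Hom^L_X(a, f ∘ h) ⟶ Hom^L_X(a, f)` induced by a function
`h : [r] → [l]` is a weak equivalence. -/
theorem homLWhisker_weakEquiv (n : ℕ) (hn : 1 ≤ n) (X : SSet.{u}) (hX : IsNCategory n X)
    (a : X _⦋0⦌) (r l : ℕ) (f : Disc.{u} l ⟶ X) (h : Fin (r + 1) → Fin (l + 1)) :
    IsWeakEquiv (homLWhisker X a h f) :=
  homLWhisker_weakEquiv_general n X hX a r l f h

end Paper
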